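/- Let S̄ be a finite set with |S̄| ≥ 2 and let Ȳ^{(1)}, …, Ȳ^{(m)} be i.i.d. S̄-valued random variables with common distribution P̄ on S̄. Define the empirical distribution P_Y(s̄') = (1/m)·Σ_{i=1}^m 1{Ȳ^{(i)} = s̄'}. Then for any κ ∈ (0,1) and ε ∈ (0,2), if m ≥ 2·(ln(2^{|S̄|} − 2) − ln κ)/ε², then Pr( Σ_{s̄'∈S̄} |P_Y(s̄') − P̄(s̄')| ≥ ε ) ≤ κ. -/

import Mathlib

/-!
For a proper nonempty `A ⊆ S̄` the empirical mass of `A` is an average of `m` independent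
indicators with mean `P̄(A)`, so by Hoeffding's inequality it exceeds `P̄(A) + ε/2` with
probability at most `exp (-m ε² / 2)`. Since both distributions have total mass one, the L1
distance is twice the excess `∑_{s ∈ A} (P_Y(s) - P̄(s))` over the set `A` where `P_Y > P̄`;
so `‖P_Y - P̄‖₁ ≥ ε` forces one of these `2^|S̄| - 2` events, and the union bound together with
the sample-size condition gives `κ`.
-/

open MeasureTheory ProbabilityTheory Finset Real

section Hoeffding

variable {Ω ι : Type*} [MeasurableSpace Ω] {μ : Measure Ω} [IsProbabilityMeasure μ] [Fintype ι]

lemma measureReal_sum_sub_integral_ge_le {X : ι → Ω → ℝ} (hX : ∀ i, Measurable (X i))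
    (hindep : iIndepFun X μ) {a b : ℝ} (hab : ∀ i ω, X i ω ∈ Set.Icc a b) {t : ℝ} (ht : 0 ≤ t) :
    μ.real {ω | t ≤ ∑ i, (X i ω - μ[X i])}
      ≤ exp (-2 * t ^ 2 / (Fintype.card ι * (b - a) ^ 2)) := by
  have hsub : ∀ i ∈ (univ : Finset ι),
      HasSubgaussianMGF (fun ω ↦ X i ω - μ[X i]) ((‖b - a‖₊ / 2) ^ 2) μ := fun i _ ↦
    hasSubgaussianMGF_of_mem_Icc (hX i).aemeasurable (ae_of_all _ (hab i))
  have hindep' : iIndepFun (fun i ↦ (fun x ↦ x - μ[X i]) ∘ X i) μ :=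
    hindep.comp _ fun _ ↦ measurable_id.sub_const _
  refine (HasSubgaussianMGF.measure_sum_ge_le_of_iIndepFun hindep' hsub ht).trans_eq ?_
  congr 1
  simp only [sum_const, card_univ, nsmul_eq_mul, NNReal.coe_mul, NNReal.coe_natCast,
    NNReal.coe_pow, NNReal.coe_div, coe_nnnorm, Real.norm_eq_abs, NNReal.coe_ofNat]
  rw [div_pow, sq_abs, show 2 * (Fintype.card ι * ((b - a) ^ 2 / 2 ^ 2)) =
    Fintype.card ι * (b - a) ^ 2 / 2 by ring, div_div_eq_mul_div]
  ring

lemma measureReal_sum_indicator_ge_le {α : Type*} [MeasurableSpace α]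
    {Y : ι → Ω → α} (hY : ∀ i, Measurable (Y i)) (hindep : iIndepFun Y μ) {s : Set α}
    (hs : MeasurableSet s) {p : ℝ} (hp : ∀ i, μ.real (Y i ⁻¹' s) = p) {t : ℝ} (ht : 0 ≤ t) :
    μ.real {ω | Fintype.card ι * p + t ≤ ∑ i, s.indicator 1 (Y i ω)}
      ≤ exp (-2 * t ^ 2 / Fintype.card ι) := by
  have hmean : ∀ i, μ[fun ω ↦ s.indicator (1 : α → ℝ) (Y i ω)] = p := fun i ↦ by
    rw [← hp i, ← integral_indicator_one (hY i hs)]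
    rfl
  have h := measureReal_sum_sub_integral_ge_le (μ := μ) (a := 0) (b := 1) (t := t)
    (X := fun i ω ↦ s.indicator (1 : α → ℝ) (Y i ω))
    (fun i ↦ (measurable_const.indicator hs).comp (hY i))
    (hindep.comp (fun _ ↦ s.indicator 1) fun _ ↦ measurable_const.indicator hs)
    (fun i ω ↦ ⟨Set.indicator_nonneg (fun _ _ ↦ zero_le_one) _,
      Set.indicator_le_self' (fun _ _ ↦ zero_le_one) _⟩) ht
  simp only [hmean, sum_sub_distrib, sum_const, card_univ, nsmul_eq_mul, sub_zero, one_pow,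
    mul_one] at h
  refine le_of_eq_of_le (congrArg μ.real (Set.ext fun ω ↦ ?_)) h
  simp only [Set.mem_ofPred_eq]
  constructor <;> intro h <;> linarith

end Hoeffding

section FiniteSums

variable {S : Type*} [Fintype S]

lemma sum_abs_eq_two_mul_sum_filter_pos {d : S → ℝ} (hd : ∑ s, d s = 0) :
    ∑ s, |d s| = 2 * ∑ s ∈ univ.filter (0 < d ·), d s := by
  rw [← sum_filter_add_sum_filter_not univ (0 < d ·)] at hd ⊢
  have hpos : ∑ s ∈ univ.filter (0 < d ·), |d s| = ∑ s ∈ univ.filter (0 < d ·), d s :=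
    sum_congr rfl fun s hs ↦ abs_of_pos (mem_filter.1 hs).2
  have hnonpos : ∑ s ∈ univ.filter (¬ 0 < d ·), |d s| = -∑ s ∈ univ.filter (¬ 0 < d ·), d s := by
    rw [← sum_neg_distrib]
    exact sum_congr rfl fun s hs ↦ abs_of_nonpos (not_lt.1 (mem_filter.1 hs).2)
  linarith

lemma exists_mem_ssubsets_univ_half_le_sum_sub [DecidableEq S] {p q : S → ℝ}
    (hpq : ∑ s, p s = ∑ s, q s) {ε : ℝ} (hε : 0 < ε) (h : ε ≤ ∑ s, |p s - q s|) :
    ∃ A ∈ (univ : Finset S).ssubsets.erase ∅, ε / 2 ≤ ∑ s ∈ A, (p s - q s) := by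
  have hd : ∑ s, (p s - q s) = 0 := by rw [sum_sub_distrib, hpq, sub_self]
  set A := univ.filter (fun s ↦ 0 < p s - q s)
  have hA : ε / 2 ≤ ∑ s ∈ A, (p s - q s) := by
    have := sum_abs_eq_two_mul_sum_filter_pos hd
    linarith
  have hA_pos : 0 < ∑ s ∈ A, (p s - q s) := by linarith
  refine ⟨A, mem_erase.2 ⟨?_, mem_ssubsets.2 (ssubset_univ_iff.2 ?_)⟩, hA⟩
  · intro hA_empty
    rw [hA_empty, sum_empty] at hA_pos
    exact hA_pos.false
  · intro hA_univ
    rw [hA_univ, hd] at hA_pos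
    exact hA_pos.false

lemma card_ssubsets_univ_erase_empty [DecidableEq S] [Nonempty S] :
    (#((univ : Finset S).ssubsets.erase ∅) : ℝ) = 2 ^ Fintype.card S - 2 := by
  have h : 2 ≤ 2 ^ Fintype.card S := Nat.le_self_pow Fintype.card_ne_zero 2
  rw [card_erase_of_mem (empty_mem_ssubsets univ_nonempty), ssubsets,
    card_erase_of_mem (mem_powerset_self _), card_powerset, card_univ, Nat.sub_sub,
    Nat.cast_sub h]
  push_cast
  ring

lemma sum_sum_ite_eq_sum_indicator {ι α : Type*} [Fintype ι] [DecidableEq α] (y : ι → α)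
    (A : Finset α) :
    ∑ a ∈ A, ∑ i, (if y i = a then (1 : ℝ) else 0) = ∑ i, (A : Set α).indicator 1 (y i) := by
  rw [sum_comm]
  refine sum_congr rfl fun i _ ↦ ?_
  simp [Set.indicator_apply]

lemma exists_mem_ssubsets_univ_add_le_sum_indicator {ι : Type*} [Fintype ι] [Nonempty ι]
    [DecidableEq S] (y : ι → S) {q : S → ℝ} (hq : ∑ s, q s = 1) {ε : ℝ} (hε : 0 < ε)
    (h : ε ≤ ∑ s, |(1 / (Fintype.card ι : ℝ)) * ∑ i, (if y i = s then (1 : ℝ) else 0) - q s|) :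
    ∃ A ∈ (univ : Finset S).ssubsets.erase ∅, Fintype.card ι * ∑ s ∈ A, q s +
      Fintype.card ι * ε / 2 ≤ ∑ i, (A : Set S).indicator 1 (y i) := by
  have hn : (0 : ℝ) < Fintype.card ι := by exact_mod_cast Fintype.card_pos
  have hsum : ∑ s, (1 / (Fintype.card ι : ℝ)) * ∑ i, (if y i = s then (1 : ℝ) else 0) =
      ∑ s, q s := by
    rw [← mul_sum, sum_sum_ite_eq_sum_indicator, hq]
    simp [hn.ne']
  obtain ⟨A, hA, hle⟩ := exists_mem_ssubsets_univ_half_le_sum_sub hsum hε h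
  refine ⟨A, hA, ?_⟩
  rw [sum_sub_distrib, ← mul_sum, sum_sum_ite_eq_sum_indicator, le_sub_iff_add_le', one_div,
    le_inv_mul_iff₀ hn] at hle
  linarith

end FiniteSums

lemma mul_exp_neg_le_of_log_bound {N κ ε m : ℝ} (hN : 0 < N) (hκ : 0 < κ) (hε : 0 < ε)
    (hm : 2 * (log N - log κ) / ε ^ 2 ≤ m) : N * exp (-m * ε ^ 2 / 2) ≤ κ := by
  rw [← log_le_log_iff (by positivity) hκ, log_mul hN.ne' (exp_pos _).ne', log_exp]
  rw [div_le_iff₀ (by positivity)] at hm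
  linarith

theorem stmt10_general {Ω : Type*} [MeasurableSpace Ω] (μ : Measure Ω) [IsProbabilityMeasure μ]
    {Sb : Type*} [Fintype Sb] [Nonempty Sb] [DecidableEq Sb]
    [MeasurableSpace Sb] [MeasurableSingletonClass Sb]
    (hcard : 2 ≤ Fintype.card Sb)
    -- i.i.d. Sb-valued random variables Y 1, ..., Y m with common distribution Pbar
    (m : ℕ) (Y : Fin m → Ω → Sb) (hYmeas : ∀ i, Measurable (Y i))
    (hindep : iIndepFun Y μ)
    (Pbar : Sb → ℝ)
    (hdist : ∀ i sb, (μ {ω | Y i ω = sb}).toReal = Pbar sb)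
    (κ ε : ℝ) (hκ0 : 0 < κ) (hκ1 : κ < 1) (hε0 : 0 < ε)
    -- the sample-size requirement
    (hm : 2 * (Real.log ((2 : ℝ) ^ (Fintype.card Sb) - 2) - Real.log κ) / ε ^ 2 ≤ (m : ℝ)) :
    -- Pr(‖P_Y − P̄‖₁ ≥ ε) ≤ κ
    μ {ω | ε ≤ ∑ sb : Sb,
        |(1 / (m : ℝ)) * ∑ i, (if Y i ω = sb then (1 : ℝ) else 0) - Pbar sb|}
      ≤ ENNReal.ofReal κ := by
  have hN1 : (1 : ℝ) < 2 ^ Fintype.card Sb - 2 := by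
    have : (2 : ℝ) ^ 2 ≤ 2 ^ Fintype.card Sb := pow_le_pow_right₀ one_le_two hcard
    linarith
  have hm0 : 0 < m := by
    have := log_pos hN1
    have := log_neg hκ0 hκ1
    exact_mod_cast (div_pos (by linarith) (by positivity)).trans_le hm
  have hPbar (i : Fin m) (A : Finset Sb) : μ.real (Y i ⁻¹' A) = ∑ s ∈ A, Pbar s := by
    rw [← sum_measureReal_preimage_singleton A fun s _ ↦ hYmeas i (measurableSet_singleton s)]
    exact sum_congr rfl fun s _ ↦ hdist i s
  have hPsum : ∑ s, Pbar s = 1 := by simpa using (hPbar ⟨0, hm0⟩ univ).symm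
  set 𝒜 := (univ : Finset Sb).ssubsets.erase ∅
  set E : Finset Sb → Set Ω := fun A ↦
    {ω | m * ∑ s ∈ A, Pbar s + m * ε / 2 ≤ ∑ i, (A : Set Sb).indicator 1 (Y i ω)}
  have hE (A : Finset Sb) : μ.real (E A) ≤ exp (-m * ε ^ 2 / 2) := by
    have := measureReal_sum_indicator_ge_le hYmeas hindep A.measurableSet
      (hPbar · A) (t := m * ε / 2) (by positivity)
    rw [Fintype.card_fin] at this
    convert this using 2
    field_simp
  have hcover : {ω | ε ≤ ∑ sb : Sb,
      |(1 / (m : ℝ)) * ∑ i, (if Y i ω = sb then (1 : ℝ) else 0) - Pbar sb|} ⊆ ⋃ A ∈ 𝒜, E A :=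
    fun ω hω ↦ by
      have : Nonempty (Fin m) := ⟨⟨0, hm0⟩⟩
      have h := exists_mem_ssubsets_univ_add_le_sum_indicator (Y · ω) hPsum hε0
        (by rwa [Fintype.card_fin])
      rw [Fintype.card_fin] at h
      obtain ⟨A, hA, hexcess⟩ := h
      exact Set.mem_biUnion hA hexcess
  rw [ENNReal.le_ofReal_iff_toReal_le (measure_ne_top _ _) hκ0.le]
  calc μ.real _ ≤ μ.real (⋃ A ∈ 𝒜, E A) := measureReal_mono hcover (measure_ne_top _ _)
    _ ≤ ∑ A ∈ 𝒜, μ.real (E A) := measureReal_biUnion_finset_le _ _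
    _ ≤ #𝒜 * exp (-m * ε ^ 2 / 2) := by
      rw [← nsmul_eq_mul]
      exact sum_le_card_nsmul _ _ _ fun A _ ↦ hE A
    _ ≤ κ := by
      rw [card_ssubsets_univ_erase_empty]
      exact mul_exp_neg_le_of_log_bound (by linarith) hκ0 hε0 hm

theorem stmt10 {Ω : Type*} [MeasurableSpace Ω] (μ : Measure Ω) [IsProbabilityMeasure μ]
    {Sb : Type*} [Fintype Sb] [Nonempty Sb] [DecidableEq Sb]
    [MeasurableSpace Sb] [MeasurableSingletonClass Sb]
    (hcard : 2 ≤ Fintype.card Sb)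
    -- i.i.d. Sb-valued random variables Y 1, ..., Y m with common distribution Pbar
    (m : ℕ) (Y : Fin m → Ω → Sb) (hYmeas : ∀ i, Measurable (Y i))
    (hindep : iIndepFun Y μ)
    (Pbar : Sb → ℝ)
    (hdist : ∀ i sb, (μ {ω | Y i ω = sb}).toReal = Pbar sb)
    (κ ε : ℝ) (hκ0 : 0 < κ) (hκ1 : κ < 1) (hε0 : 0 < ε) (hε2 : ε < 2)
    -- the sample-size requirement
    (hm : 2 * (Real.log ((2 : ℝ) ^ (Fintype.card Sb) - 2) - Real.log κ) / ε ^ 2 ≤ (m : ℝ)) :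
    -- Pr(‖P_Y − P̄‖₁ ≥ ε) ≤ κ
    μ {ω | ε ≤ ∑ sb : Sb,
        |(1 / (m : ℝ)) * ∑ i, (if Y i ω = sb then (1 : ℝ) else 0) - Pbar sb|}
      ≤ ENNReal.ofReal κ :=
  stmt10_general μ hcard m Y hYmeas hindep Pbar hdist κ ε hκ0 hκ1 hε0 hm
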